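/- Assume Condition 2 (quasi-spiked covariance structure): λ_k ≥ λ_{k+1} + d and λ_{k+1} − λ_p ≤ ε for some d, ε > 0, and assume k + 2 ≤ p. Decompose δ = δ_1 + δ_2 with δ_1 ∈ W_1 = span{ξ_1, ..., ξ_k} and δ_2 ∈ W_2 = span{ξ_{k+1}, ..., ξ_p}, and assume δ_2 ≠ 0 (i.e., δ ∉ W_1). Then the eigenvalues η_1 ≥ ... ≥ η_p of Σ^tot satisfy η_{k+1} ≥ η_{k+2} + d̃ − ε, where d̃ = d·ρ||δ_2||_2^2/(d + ρ||δ||_2^2). (Lemma 4, second case) -/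

import Mathlib

set_option maxHeartbeats 400000

open Matrix Submodule Module

lemma dot_sum_smul {p m : ℕ} (v : Fin p → ℝ) (g : Fin m → ℝ) (f : Fin m → Fin p → ℝ) :
    v ⬝ᵥ (∑ j, g j • f j) = ∑ j, g j * (v ⬝ᵥ f j) := by
  simp only [dotProduct, Finset.sum_apply, Pi.smul_apply, smul_eq_mul, Finset.mul_sum]
  rw [Finset.sum_comm]
  exact Finset.sum_congr rfl fun j _ => Finset.sum_congr rfl fun i _ => by ring

lemma rowdot {p : ℕ} (Q : Matrix (Fin p) (Fin p) ℝ) (hQ : Q * Qᵀ = 1) (a b : Fin p) :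
    Q a ⬝ᵥ Q b = if a = b then (1:ℝ) else 0 := by
  have := congrFun (congrFun hQ a) b
  simpa [Matrix.mul_apply, Matrix.one_apply, dotProduct] using this

lemma parseval {p : ℕ} (Q : Matrix (Fin p) (Fin p) ℝ) (hQ : Q * Qᵀ = 1) (u v : Fin p → ℝ) :
    ∑ j, (Q j ⬝ᵥ u) * (Q j ⬝ᵥ v) = u ⬝ᵥ v := by
  have hQ' : Qᵀ * Q = 1 := mul_eq_one_comm.mp hQ
  have h1 : ∑ j, (Q j ⬝ᵥ u) * (Q j ⬝ᵥ v) = (Q *ᵥ u) ⬝ᵥ (Q *ᵥ v) := by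
    simp [dotProduct, mulVec]
  rw [h1, dotProduct_mulVec]
  have h2 : (Q *ᵥ u) ᵥ* Q = u ᵥ* (Qᵀ * Q) := by
    rw [← Matrix.vecMul_vecMul, Matrix.vecMul_transpose]
  rw [h2, hQ', Matrix.vecMul_one]

lemma qform {p : ℕ} (Q : Matrix (Fin p) (Fin p) ℝ) (M : Matrix (Fin p) (Fin p) ℝ)
    (μ : Fin p → ℝ) (hM : M = Qᵀ * diagonal μ * Q) (x : Fin p → ℝ) :
    x ⬝ᵥ M *ᵥ x = ∑ j, μ j * ((Q j ⬝ᵥ x) * (Q j ⬝ᵥ x)) := by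
  subst hM
  rw [Matrix.mul_assoc, ← Matrix.mulVec_mulVec, dotProduct_mulVec,
    Matrix.vecMul_transpose, ← Matrix.mulVec_mulVec]
  have h3 : ∀ y : Fin p → ℝ, y ⬝ᵥ (diagonal μ *ᵥ y) = ∑ j, μ j * (y j * y j) := by
    intro y
    simp only [dotProduct, Matrix.mulVec_diagonal]
    exact Finset.sum_congr rfl fun j _ => by ring
  rw [h3]
  exact Finset.sum_congr rfl fun j _ => by simp [mulVec]

lemma span_dot_zero {p : ℕ} {s : Set (Fin p → ℝ)} {x v : Fin p → ℝ}
    (hx : x ∈ span ℝ s) (h : ∀ y ∈ s, v ⬝ᵥ y = 0) : v ⬝ᵥ x = 0 := by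
  induction hx using Submodule.span_induction with
  | mem y hy => exact h y hy
  | zero => simp
  | add a b _ _ ha hb => rw [dotProduct_add, ha, hb, add_zero]
  | smul c a _ ha => rw [dotProduct_smul, ha, smul_zero]

lemma finrank_span_orth {p m : ℕ} (f : Fin m → (Fin p → ℝ))
    (h0 : ∀ i j, i ≠ j → f i ⬝ᵥ f j = 0) (h1 : ∀ i, f i ⬝ᵥ f i ≠ 0) :
    finrank ℝ (span ℝ (Set.range f)) = m := by
  have hli : LinearIndependent ℝ f := by
    rw [Fintype.linearIndependent_iff]
    intro g hg i
    have h2 : f i ⬝ᵥ (∑ j, g j • f j) = 0 := by rw [hg]; simp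
    rw [dot_sum_smul] at h2
    rw [Finset.sum_eq_single i] at h2
    · rcases mul_eq_zero.mp h2 with h | h
      · exact h
      · exact absurd h (h1 i)
    · intro j _ hj; rw [h0 i j (Ne.symm hj), mul_zero]
    · intro h; exact absurd (Finset.mem_univ i) h
  rw [finrank_span_eq_card hli, Fintype.card_fin]

lemma dot_self_pos {p : ℕ} {x : Fin p → ℝ} (hx : x ≠ 0) : 0 < x ⬝ᵥ x := by
  obtain ⟨i, hi⟩ := Function.ne_iff.mp hx
  exact Finset.sum_pos' (fun j _ => mul_self_nonneg _)
    ⟨i, Finset.mem_univ i, mul_self_pos.mpr hi⟩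

lemma inf_ne_bot {p : ℕ} (U X : Submodule ℝ (Fin p → ℝ))
    (h : p < finrank ℝ U + finrank ℝ X) : ∃ x : Fin p → ℝ, x ∈ U ⊓ X ∧ x ≠ 0 := by
  have hle : finrank ℝ ↥(U ⊔ X) ≤ p := by
    simpa [Module.finrank_pi] using Submodule.finrank_le (U ⊔ X)
  have heq := Submodule.finrank_sup_add_finrank_inf_eq U X
  have hpos : 0 < finrank ℝ ↥(U ⊓ X) := by omega
  obtain ⟨⟨x, hx⟩, hxne⟩ := Module.finrank_pos_iff_exists_ne_zero.mp hpos
  exact ⟨x, hx, fun h0 => hxne (by simp [Subtype.ext_iff, h0])⟩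

lemma inf_ker_rank {p : ℕ} (Y : Submodule ℝ (Fin p → ℝ)) (δ : Fin p → ℝ) :
    ∃ X : Submodule ℝ (Fin p → ℝ), (∀ x ∈ X, x ∈ Y ∧ δ ⬝ᵥ x = 0) ∧
      finrank ℝ Y - 1 ≤ finrank ℝ X := by
  let fδ : (Fin p → ℝ) →ₗ[ℝ] ℝ :=
    { toFun := fun y => δ ⬝ᵥ y
      map_add' := fun a b => dotProduct_add δ a b
      map_smul' := fun c a => by simp [dotProduct_smul] }
  let g : Y →ₗ[ℝ] ℝ := fδ.domRestrict Y
  refine ⟨Submodule.map Y.subtype (LinearMap.ker g), ?_, ?_⟩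
  · intro x hx
    obtain ⟨y, hyker, hxy⟩ := hx
    refine ⟨hxy ▸ y.2, ?_⟩
    have h5 : g y = 0 := hyker
    rw [← hxy]
    exact h5
  · rw [Submodule.finrank_map_subtype_eq Y (LinearMap.ker g)]
    have h1 := LinearMap.finrank_range_add_finrank_ker g
    have h3 : finrank ℝ (LinearMap.range g) ≤ 1 := by
      have h4 := Submodule.finrank_le (LinearMap.range g)
      simpa using h4
    omega

lemma keyineq {d ρ A B C s t dt : ℝ} (hd : 0 < d) (hρ : 0 < ρ)
    (hA : 0 ≤ A) (hB : 0 < B) (hC : 0 ≤ C) (hs : s ^ 2 ≤ C * A)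
    (hdt : dt = d * ρ * B / (d + ρ * (C + B))) :
    dt * (A + t ^ 2 * B) ≤ d * A + ρ * (s + t * B) ^ 2 := by
  have hT : 0 < d + ρ * (C + B) := by positivity
  rw [hdt, div_mul_eq_mul_div, div_le_iff₀ hT]
  rcases hC.eq_or_lt with h0 | h0
  · have hs0 : s = 0 := by nlinarith [sq_nonneg s]
    subst hs0; rw [← h0]
    nlinarith [mul_nonneg (sq_nonneg d) hA,
      mul_nonneg (mul_nonneg (sq_nonneg ρ) (sq_nonneg t)) (pow_pos hB 3).le]
  · nlinarith [sq_nonneg (d * s + ρ * C * (s + t * B)),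
      mul_nonneg (mul_nonneg (mul_nonneg hd.le hρ.le) hC) (sub_nonneg.2 hs),
      mul_nonneg (sq_nonneg d) (sub_nonneg.2 hs),
      mul_nonneg (mul_nonneg (mul_nonneg (sq_nonneg ρ) hC) hB.le) (sq_nonneg (s + t * B)),
      h0.le, mul_pos h0 hT]

lemma partA_aux {p k : ℕ} (hk : 1 ≤ k) (hkp : k < p) (hk2p : k + 2 ≤ p)
    (M S : Matrix (Fin p) (Fin p) ℝ) (lam η : Fin p → ℝ)
    (xi : Fin p → Fin p → ℝ) (V : Matrix (Fin p) (Fin p) ℝ) (δ : Fin p → ℝ) (ρ : ℝ)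
    (hQQ : Vᵀ * Vᵀᵀ = 1)
    (horth : ∀ i j : Fin p, xi i ⬝ᵥ xi j = if i = j then (1 : ℝ) else 0)
    (hdesc : ∀ i j : Fin p, i ≤ j → lam j ≤ lam i)
    (hηdesc : ∀ i j : Fin p, i ≤ j → η j ≤ η i)
    (qM : ∀ x, x ⬝ᵥ M *ᵥ x = ∑ j, η j * ((Vᵀ j ⬝ᵥ x) * (Vᵀ j ⬝ᵥ x)))
    (qS : ∀ x, x ⬝ᵥ S *ᵥ x = ∑ j, lam j * ((xi j ⬝ᵥ x) * (xi j ⬝ᵥ x)))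
    (qMS : ∀ x, x ⬝ᵥ M *ᵥ x = x ⬝ᵥ S *ᵥ x + ρ * ((δ ⬝ᵥ x) * (δ ⬝ᵥ x)))
    (parsξ : ∀ u v, ∑ j, (xi j ⬝ᵥ u) * (xi j ⬝ᵥ v) = u ⬝ᵥ v)
    (parsV : ∀ u v, ∑ j, (Vᵀ j ⬝ᵥ u) * (Vᵀ j ⬝ᵥ v) = u ⬝ᵥ v) :
    η ⟨k + 1, Nat.lt_of_lt_of_le (Nat.lt_succ_self _) hk2p⟩ ≤ lam ⟨k, hkp⟩ := by
  have hUrank : finrank ℝ (span ℝ (Set.range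
      (fun i : Fin (k + 2) => Vᵀ ⟨i.1, lt_of_lt_of_le i.isLt hk2p⟩))) = k + 2 := by
    apply finrank_span_orth
    · intro i j hij
      rw [rowdot Vᵀ hQQ,
        if_neg (by simp only [ne_eq, Fin.mk.injEq]; exact fun h => hij (Fin.ext h))]
    · intro i
      rw [rowdot Vᵀ hQQ, if_pos rfl]; norm_num
  have hYrank : finrank ℝ (span ℝ (Set.range
      (fun i : Fin (p - k) => xi ⟨k + i.1, Nat.add_lt_of_lt_sub' i.isLt⟩))) = p - k := by
    apply finrank_span_orth
    · intro i j hij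
      rw [horth, if_neg (by
        simp only [ne_eq, Fin.mk.injEq]
        exact fun h => hij (Fin.ext (by omega)))]
    · intro i
      rw [horth, if_pos rfl]; norm_num
  obtain ⟨X, hXprop, hXrank⟩ := inf_ker_rank (span ℝ (Set.range
    (fun i : Fin (p - k) => xi ⟨k + i.1, Nat.add_lt_of_lt_sub' i.isLt⟩))) δ
  rw [hYrank] at hXrank
  obtain ⟨x, hxUX, hxne⟩ := inf_ne_bot
    (span ℝ (Set.range (fun i : Fin (k + 2) => Vᵀ ⟨i.1, lt_of_lt_of_le i.isLt hk2p⟩))) X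
    (by rw [hUrank]; omega)
  obtain ⟨hxU2, hxX⟩ := hxUX
  obtain ⟨hxY, hδx⟩ := hXprop x hxX
  clear hxX hXprop hXrank hUrank hYrank  
  have cV : ∀ j : Fin p, k + 2 ≤ j.1 → Vᵀ j ⬝ᵥ x = 0 := by
    intro j hj
    refine span_dot_zero hxU2 ?_
    rintro y ⟨i, rfl⟩
    have hi := i.isLt
    rw [rowdot Vᵀ hQQ, if_neg (by simp only [ne_eq, Fin.ext_iff]; omega)]
  have cξ : ∀ j : Fin p, j.1 < k → xi j ⬝ᵥ x = 0 := by
    intro j hj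
    refine span_dot_zero hxY ?_
    rintro y ⟨i, rfl⟩
    rw [horth, if_neg (by simp only [ne_eq, Fin.ext_iff]; omega)]
  have h1 : η ⟨k + 1, by omega⟩ * (x ⬝ᵥ x) ≤ x ⬝ᵥ M *ᵥ x := by
    rw [qM x, ← parsV x x, Finset.mul_sum]
    refine Finset.sum_le_sum fun j _ => ?_
    by_cases hj : j.1 ≤ k + 1
    · exact mul_le_mul_of_nonneg_right
        (hηdesc j ⟨k + 1, by omega⟩ (by rw [Fin.le_def]; exact hj)) (mul_self_nonneg _)
    · rw [cV j (by omega)]; simp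
  have h2 : x ⬝ᵥ M *ᵥ x ≤ lam ⟨k, hkp⟩ * (x ⬝ᵥ x) := by
    rw [qMS x, hδx]
    simp only [mul_zero, zero_mul, add_zero]
    rw [qS x, ← parsξ x x, Finset.mul_sum]
    refine Finset.sum_le_sum fun j _ => ?_
    by_cases hj : k ≤ j.1
    · exact mul_le_mul_of_nonneg_right
        (hdesc ⟨k, hkp⟩ j (by rw [Fin.le_def]; exact hj)) (mul_self_nonneg _)
    · rw [cξ j (by omega)]; simp
  exact le_of_mul_le_mul_right (h1.trans h2) (dot_self_pos hxne)

lemma partB_aux {p k : ℕ} (hk : 1 ≤ k) (hkp : k < p) (hk2p : k + 2 ≤ p)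
    (M S : Matrix (Fin p) (Fin p) ℝ) (lam η : Fin p → ℝ)
    (xi : Fin p → Fin p → ℝ) (V : Matrix (Fin p) (Fin p) ℝ)
    (δ δ1 δ2 : Fin p → ℝ) (ρ d dt : ℝ) (hρ : 0 < ρ) (hd : 0 < d)
    (hQQ : Vᵀ * Vᵀᵀ = 1)
    (horth : ∀ i j : Fin p, xi i ⬝ᵥ xi j = if i = j then (1 : ℝ) else 0)
    (hdesc : ∀ i j : Fin p, i ≤ j → lam j ≤ lam i)
    (hηdesc : ∀ i j : Fin p, i ≤ j → η j ≤ η i)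
    (qM : ∀ x, x ⬝ᵥ M *ᵥ x = ∑ j, η j * ((Vᵀ j ⬝ᵥ x) * (Vᵀ j ⬝ᵥ x)))
    (qS : ∀ x, x ⬝ᵥ S *ᵥ x = ∑ j, lam j * ((xi j ⬝ᵥ x) * (xi j ⬝ᵥ x)))
    (qMS : ∀ x, x ⬝ᵥ M *ᵥ x = x ⬝ᵥ S *ᵥ x + ρ * ((δ ⬝ᵥ x) * (δ ⬝ᵥ x)))
    (parsξ : ∀ u v, ∑ j, (xi j ⬝ᵥ u) * (xi j ⬝ᵥ v) = u ⬝ᵥ v)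
    (parsV : ∀ u v, ∑ j, (Vᵀ j ⬝ᵥ u) * (Vᵀ j ⬝ᵥ v) = u ⬝ᵥ v)
    (hgap : lam ⟨k, hkp⟩ + d ≤ lam ⟨k - 1, Nat.lt_of_le_of_lt (Nat.sub_le k 1) hkp⟩)
    (hdec : δ = δ1 + δ2)
    (eK : ∀ j : Fin p, j.1 < k → xi j ⬝ᵥ δ2 = 0)
    (dK : ∀ j : Fin p, k ≤ j.1 → xi j ⬝ᵥ δ1 = 0)
    (hBpos : 0 < δ2 ⬝ᵥ δ2)
    (hCnn : 0 ≤ δ1 ⬝ᵥ δ1)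
    (hdt' : dt = d * ρ * (δ2 ⬝ᵥ δ2) / (d + ρ * ((δ1 ⬝ᵥ δ1) + (δ2 ⬝ᵥ δ2)))) :
    lam ⟨p - 1, Nat.sub_lt (Nat.lt_of_le_of_lt (Nat.zero_le k) hkp) Nat.one_pos⟩ + dt ≤ η ⟨k, hkp⟩ := by
  have hWrank : finrank ℝ (span ℝ (Set.range
      (fun i : Fin (k + 1) => if h : i.1 < k then xi ⟨i.1, lt_trans h hkp⟩ else δ2))) = k + 1 := by
    apply finrank_span_orth
    · intro i j hij
      by_cases hi : i.1 < k
      · by_cases hj : j.1 < k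
        · rw [dif_pos hi, dif_pos hj, horth,
            if_neg (by simp only [ne_eq, Fin.mk.injEq]; exact fun h => hij (Fin.ext h))]
        · rw [dif_pos hi, dif_neg hj]
          exact eK _ hi
      · by_cases hj : j.1 < k
        · rw [dif_neg hi, dif_pos hj, dotProduct_comm]
          exact eK _ hj
        · exact absurd (Fin.ext (by have := i.isLt; have := j.isLt; omega)) hij
    · intro i
      by_cases hi : i.1 < k
      · rw [dif_pos hi, horth, if_pos rfl]; norm_num
      · rw [dif_neg hi]; exact ne_of_gt hBpos
  have hY2rank : finrank ℝ (span ℝ (Set.range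
      (fun i : Fin (p - k) => Vᵀ ⟨k + i.1, Nat.add_lt_of_lt_sub' i.isLt⟩))) = p - k := by
    apply finrank_span_orth
    · intro i j hij
      rw [rowdot Vᵀ hQQ, if_neg (by
        simp only [ne_eq, Fin.mk.injEq]
        exact fun h => hij (Fin.ext (by omega)))]
    · intro i
      rw [rowdot Vᵀ hQQ, if_pos rfl]; norm_num
  obtain ⟨x, hxmem, hxne⟩ := inf_ne_bot
    (span ℝ (Set.range
      (fun i : Fin (k + 1) => if h : i.1 < k then xi ⟨i.1, lt_trans h hkp⟩ else δ2)))
    (span ℝ (Set.range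
      (fun i : Fin (p - k) => Vᵀ ⟨k + i.1, Nat.add_lt_of_lt_sub' i.isLt⟩)))
    (by rw [hWrank, hY2rank]; omega)
  obtain ⟨hxW, hxY2⟩ := Submodule.mem_inf.mp hxmem
  clear hxmem
  clear hWrank hY2rank
  have cV2 : ∀ j : Fin p, j.1 < k → Vᵀ j ⬝ᵥ x = 0 := by
    intro j hj
    refine span_dot_zero hxY2 ?_
    rintro y ⟨i, rfl⟩
    rw [rowdot Vᵀ hQQ, if_neg (by simp only [ne_eq, Fin.ext_iff]; omega)]
  rw [mem_span_range_iff_exists_fun] at hxW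
  obtain ⟨a, ha⟩ := hxW
  have dotW : ∀ v : Fin p → ℝ, v ⬝ᵥ x = ∑ i, a i *
      (v ⬝ᵥ (if h : i.1 < k then xi ⟨i.1, lt_trans h hkp⟩ else δ2)) := by
    intro v
    rw [← ha, dot_sum_smul]
  have hkk : ¬ ((⟨k, Nat.lt_succ_self k⟩ : Fin (k + 1)) : ℕ) < k := by simp
  have key1 : ∀ j : Fin p, k ≤ j.1 →
      xi j ⬝ᵥ x = a ⟨k, Nat.lt_succ_self k⟩ * (xi j ⬝ᵥ δ2) := by
    intro j hj
    rw [dotW (xi j), Finset.sum_eq_single (⟨k, Nat.lt_succ_self k⟩ : Fin (k + 1))]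
    · rw [dif_neg hkk]
    · intro b _ hb
      have hbk : b.1 < k := by
        have h1 := b.isLt
        have h2 : b.1 ≠ k := fun h => hb (Fin.ext h)
        omega
      rw [dif_pos hbk, horth, if_neg (by simp only [ne_eq, Fin.ext_iff]; omega), mul_zero]
    · intro h; exact absurd (Finset.mem_univ _) h
  have key2 : δ2 ⬝ᵥ x = a ⟨k, Nat.lt_succ_self k⟩ * (δ2 ⬝ᵥ δ2) := by
    rw [dotW δ2, Finset.sum_eq_single (⟨k, Nat.lt_succ_self k⟩ : Fin (k + 1))]
    · rw [dif_neg hkk]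
    · intro b _ hb
      have hbk : b.1 < k := by
        have h1 := b.isLt
        have h2 : b.1 ≠ k := fun h => hb (Fin.ext h)
        omega
      rw [dif_pos hbk, dotProduct_comm, eK _ hbk, mul_zero]
    · intro h; exact absurd (Finset.mem_univ _) h
  have hteB : ∑ j, (a ⟨k, Nat.lt_succ_self k⟩ * (xi j ⬝ᵥ δ2)) *
      (a ⟨k, Nat.lt_succ_self k⟩ * (xi j ⬝ᵥ δ2))
      = a ⟨k, Nat.lt_succ_self k⟩ ^ 2 * (δ2 ⬝ᵥ δ2) := by
    rw [← parsξ δ2 δ2, Finset.mul_sum]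
    exact Finset.sum_congr rfl fun j _ => by ring
  have hA0 : a ⟨k, Nat.lt_succ_self k⟩ ^ 2 * (δ2 ⬝ᵥ δ2) ≤ x ⬝ᵥ x := by
    rw [← hteB, ← parsξ x x]
    refine Finset.sum_le_sum fun j _ => ?_
    by_cases hj : k ≤ j.1
    · rw [key1 j hj]
    · rw [eK j (by omega)]
      simpa using mul_self_nonneg (xi j ⬝ᵥ x)
  have hs_eq : δ1 ⬝ᵥ x = ∑ j, (xi j ⬝ᵥ δ1) *
      ((xi j ⬝ᵥ x) - a ⟨k, Nat.lt_succ_self k⟩ * (xi j ⬝ᵥ δ2)) := by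
    rw [← parsξ δ1 x]
    refine Finset.sum_congr rfl fun j _ => ?_
    by_cases hj : k ≤ j.1
    · rw [dK j hj]; ring
    · rw [eK j (by omega)]; ring
  have hdd2 : ∑ j, (xi j ⬝ᵥ δ1) ^ 2 = δ1 ⬝ᵥ δ1 := by
    rw [← parsξ δ1 δ1]
    exact Finset.sum_congr rfl fun j _ => by ring
  have hsub2 : ∑ j, ((xi j ⬝ᵥ x) - a ⟨k, Nat.lt_succ_self k⟩ * (xi j ⬝ᵥ δ2)) ^ 2
      = x ⬝ᵥ x - a ⟨k, Nat.lt_succ_self k⟩ ^ 2 * (δ2 ⬝ᵥ δ2) := by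
    have h1 : ∀ j : Fin p, ((xi j ⬝ᵥ x) - a ⟨k, Nat.lt_succ_self k⟩ * (xi j ⬝ᵥ δ2)) ^ 2
        = (xi j ⬝ᵥ x) * (xi j ⬝ᵥ x)
          - 2 * a ⟨k, Nat.lt_succ_self k⟩ * ((xi j ⬝ᵥ x) * (xi j ⬝ᵥ δ2))
          + (a ⟨k, Nat.lt_succ_self k⟩ * (xi j ⬝ᵥ δ2)) *
            (a ⟨k, Nat.lt_succ_self k⟩ * (xi j ⬝ᵥ δ2)) := fun j => by ring
    rw [Finset.sum_congr rfl fun j _ => h1 j, Finset.sum_add_distrib,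
      Finset.sum_sub_distrib, ← Finset.mul_sum, parsξ x x, parsξ x δ2, hteB]
    have h2 : x ⬝ᵥ δ2 = a ⟨k, Nat.lt_succ_self k⟩ * (δ2 ⬝ᵥ δ2) := by
      rw [dotProduct_comm]; exact key2
    rw [h2]; ring
  have hCS : (δ1 ⬝ᵥ x) ^ 2 ≤ (δ1 ⬝ᵥ δ1) *
      (x ⬝ᵥ x - a ⟨k, Nat.lt_succ_self k⟩ ^ 2 * (δ2 ⬝ᵥ δ2)) := by
    rw [hs_eq, ← hdd2, ← hsub2]
    exact Finset.sum_mul_sq_le_sq_mul_sq Finset.univ _ _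
  have hterm : ∀ j : Fin p,
      lam ⟨p - 1, by omega⟩ * ((xi j ⬝ᵥ x) * (xi j ⬝ᵥ x))
        + d * ((xi j ⬝ᵥ x) * (xi j ⬝ᵥ x)
          - (a ⟨k, Nat.lt_succ_self k⟩ * (xi j ⬝ᵥ δ2)) *
            (a ⟨k, Nat.lt_succ_self k⟩ * (xi j ⬝ᵥ δ2)))
      ≤ lam j * ((xi j ⬝ᵥ x) * (xi j ⬝ᵥ x)) := by
    intro j
    have hP1 : lam ⟨p - 1, by omega⟩ ≤ lam j :=
      hdesc j ⟨p - 1, by omega⟩ (by rw [Fin.le_def]; show j.1 ≤ p - 1; have := j.isLt; omega)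
    by_cases hj : k ≤ j.1
    · rw [key1 j hj]
      nlinarith [mul_self_nonneg (a ⟨k, Nat.lt_succ_self k⟩ * (xi j ⬝ᵥ δ2))]
    · rw [eK j (by omega)]
      have hkm : lam ⟨k - 1, by omega⟩ ≤ lam j :=
        hdesc j ⟨k - 1, by omega⟩ (by rw [Fin.le_def]; show j.1 ≤ k - 1; omega)
      nlinarith [mul_self_nonneg (xi j ⬝ᵥ x), hgap, hkm,
        hdesc ⟨k, hkp⟩ ⟨p - 1, by omega⟩ (by rw [Fin.le_def]; show k ≤ p - 1; omega)]
  have hsum1 : lam ⟨p - 1, by omega⟩ * (x ⬝ᵥ x)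
      + d * (x ⬝ᵥ x - a ⟨k, Nat.lt_succ_self k⟩ ^ 2 * (δ2 ⬝ᵥ δ2))
      ≤ ∑ j, lam j * ((xi j ⬝ᵥ x) * (xi j ⬝ᵥ x)) := by
    have h6 := Finset.sum_le_sum fun j (_ : j ∈ Finset.univ) => hterm j
    have h7 : ∑ j, (lam ⟨p - 1, by omega⟩ * ((xi j ⬝ᵥ x) * (xi j ⬝ᵥ x))
        + d * ((xi j ⬝ᵥ x) * (xi j ⬝ᵥ x)
          - (a ⟨k, Nat.lt_succ_self k⟩ * (xi j ⬝ᵥ δ2)) *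
            (a ⟨k, Nat.lt_succ_self k⟩ * (xi j ⬝ᵥ δ2))))
        = lam ⟨p - 1, by omega⟩ * (x ⬝ᵥ x)
          + d * (x ⬝ᵥ x - a ⟨k, Nat.lt_succ_self k⟩ ^ 2 * (δ2 ⬝ᵥ δ2)) := by
      rw [Finset.sum_add_distrib, ← Finset.mul_sum, ← Finset.mul_sum,
        Finset.sum_sub_distrib, parsξ x x, hteB]
    rw [← h7]
    exact h6
  have hδx : δ ⬝ᵥ x = (δ1 ⬝ᵥ x) + a ⟨k, Nat.lt_succ_self k⟩ * (δ2 ⬝ᵥ δ2) := by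
    rw [hdec, add_dotProduct, key2]
  have hkey := keyineq (t := a ⟨k, Nat.lt_succ_self k⟩) hd hρ
    (by linarith [hA0]) hBpos hCnn hCS hdt'
  have hlow : (lam ⟨p - 1, by omega⟩ + dt) * (x ⬝ᵥ x) ≤ x ⬝ᵥ M *ᵥ x := by
    rw [qMS x, qS x, hδx]
    have e1 : dt * ((x ⬝ᵥ x - a ⟨k, Nat.lt_succ_self k⟩ ^ 2 * (δ2 ⬝ᵥ δ2))
        + a ⟨k, Nat.lt_succ_self k⟩ ^ 2 * (δ2 ⬝ᵥ δ2)) = dt * (x ⬝ᵥ x) := by ring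
    have e2 : ρ * (((δ1 ⬝ᵥ x) + a ⟨k, Nat.lt_succ_self k⟩ * (δ2 ⬝ᵥ δ2)) *
        ((δ1 ⬝ᵥ x) + a ⟨k, Nat.lt_succ_self k⟩ * (δ2 ⬝ᵥ δ2)))
        = ρ * ((δ1 ⬝ᵥ x) + a ⟨k, Nat.lt_succ_self k⟩ * (δ2 ⬝ᵥ δ2)) ^ 2 := by ring
    have e3 : (lam ⟨p - 1, by omega⟩ + dt) * (x ⬝ᵥ x)
        = lam ⟨p - 1, by omega⟩ * (x ⬝ᵥ x) + dt * (x ⬝ᵥ x) := by ring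
    linarith [hkey, hsum1, e1, e2, e3]
  have hupper : x ⬝ᵥ M *ᵥ x ≤ η ⟨k, hkp⟩ * (x ⬝ᵥ x) := by
    rw [qM x, ← parsV x x, Finset.mul_sum]
    refine Finset.sum_le_sum fun j _ => ?_
    by_cases hj : k ≤ j.1
    · exact mul_le_mul_of_nonneg_right
        (hηdesc ⟨k, hkp⟩ j (by rw [Fin.le_def]; exact hj)) (mul_self_nonneg _)
    · rw [cV2 j (by omega)]; simp
  exact le_of_mul_le_mul_right (hlow.trans hupper) (dot_self_pos hxne)

/-- Lemma 4 (second case): under Condition 2, if `δ = δ₁ + δ₂` with `δ₂ ≠ 0`,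
then the eigenvalues of `Σᵗᵒᵗ = Σ + ρ δ δᵀ` satisfy `η_{k+1} ≥ η_{k+2} + d̃ − ε`,
where `d̃ = d·ρ‖δ₂‖₂²/(d + ρ‖δ‖₂²)`. -/
theorem total_covariance_eigengap_delta_not_in_W1
    {p k : ℕ} (hk : 1 ≤ k) (hkp : k < p) (hk2p : k + 2 ≤ p)
    (S : Matrix (Fin p) (Fin p) ℝ) (hS : S.IsSymm)
    (lam : Fin p → ℝ) (xi : Fin p → (Fin p → ℝ))
    (hpos : ∀ j, 0 < lam j)
    (hdesc : ∀ i j : Fin p, i ≤ j → lam j ≤ lam i)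
    (horth : ∀ i j : Fin p, xi i ⬝ᵥ xi j = if i = j then (1 : ℝ) else 0)
    (heig : ∀ j, S.mulVec (xi j) = lam j • xi j)
    (δ : Fin p → ℝ) (ρ : ℝ) (hρ : 0 < ρ)
    -- η are the eigenvalues of Σᵗᵒᵗ in descending order
    (η : Fin p → ℝ) (hηdesc : ∀ i j : Fin p, i ≤ j → η j ≤ η i)
    (V : Matrix (Fin p) (Fin p) ℝ) (hV : Vᵀ * V = 1)
    (hdiag : Vᵀ * (S + ρ • vecMulVec δ δ) * V = Matrix.diagonal η)
    -- Condition 2 (quasi-spiked covariance structure)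
    (d ε : ℝ) (hd : 0 < d) (hε : 0 < ε)
    (hgap : lam ⟨k, hkp⟩ + d ≤ lam ⟨k - 1, by omega⟩)
    (hquasi : lam ⟨k, hkp⟩ - lam ⟨p - 1, by omega⟩ ≤ ε)
    -- decomposition δ = δ₁ + δ₂ with δ₂ ≠ 0
    (δ1 δ2 : Fin p → ℝ) (hdec : δ = δ1 + δ2)
    (hδ1 : δ1 ∈ Submodule.span ℝ
      (Set.range fun i : Fin k => xi ⟨i.1, lt_trans i.isLt hkp⟩))
    (hδ2 : δ2 ∈ Submodule.span ℝ
      (Set.range fun i : Fin (p - k) => xi ⟨k + i.1, by omega⟩))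
    (hδ2ne : δ2 ≠ 0)
    (dt : ℝ)
    (hdt : dt = d * ρ * (∑ i, δ2 i ^ 2) / (d + ρ * ∑ i, δ i ^ 2)) :
    η ⟨k + 1, by omega⟩ + dt - ε ≤ η ⟨k, hkp⟩ := by
  set M : Matrix (Fin p) (Fin p) ℝ := S + ρ • vecMulVec δ δ with hMdef
  set P : Matrix (Fin p) (Fin p) ℝ := Matrix.of xi with hPdef
  have hPapp : ∀ j, P j = xi j := fun j => rfl
  have hPP : P * Pᵀ = 1 := by
    ext i j
    have := horth i j
    simp only [dotProduct] at this
    simp [Matrix.mul_apply, Matrix.one_apply, hPdef, this]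
  have hPtP : Pᵀ * P = 1 := mul_eq_one_comm.mp hPP
  have hSP : S * Pᵀ = Pᵀ * diagonal lam := by
    ext i j
    have h1 := congrFun (heig j) i
    simp only [mulVec, dotProduct, Pi.smul_apply, smul_eq_mul] at h1
    rw [Matrix.mul_diagonal]
    simp only [Matrix.mul_apply, Matrix.transpose_apply, hPdef, Matrix.of_apply]
    rw [h1]; ring
  have hSdec : S = Pᵀ * diagonal lam * P := by
    have h1 : S * (Pᵀ * P) = Pᵀ * diagonal lam * P := by
      rw [← Matrix.mul_assoc, hSP]
    rwa [hPtP, Matrix.mul_one] at h1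
  have hQQ : Vᵀ * (Vᵀ)ᵀ = 1 := by rw [Matrix.transpose_transpose]; exact hV
  have hVVt : V * Vᵀ = 1 := mul_eq_one_comm.mp hV
  have hMdec : M = (Vᵀ)ᵀ * diagonal η * Vᵀ := by
    rw [Matrix.transpose_transpose]
    have h := congrArg (fun X => V * X * Vᵀ) hdiag
    have h2 : V * (Vᵀ * M * V) * Vᵀ = M := by
      rw [← Matrix.mul_assoc V (Vᵀ * M) V, ← Matrix.mul_assoc V Vᵀ M, hVVt,
        Matrix.one_mul, Matrix.mul_assoc M V Vᵀ, hVVt, Matrix.mul_one]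
    rw [← h]
    exact h2.symm
  -- quadratic forms
  have qM : ∀ x, x ⬝ᵥ M *ᵥ x = ∑ j, η j * ((Vᵀ j ⬝ᵥ x) * (Vᵀ j ⬝ᵥ x)) :=
    qform Vᵀ M η hMdec
  have qS : ∀ x, x ⬝ᵥ S *ᵥ x = ∑ j, lam j * ((xi j ⬝ᵥ x) * (xi j ⬝ᵥ x)) :=
    qform P S lam hSdec
  have parsξ : ∀ u v, ∑ j, (xi j ⬝ᵥ u) * (xi j ⬝ᵥ v) = u ⬝ᵥ v := parseval P hPP
  have parsV : ∀ u v, ∑ j, (Vᵀ j ⬝ᵥ u) * (Vᵀ j ⬝ᵥ v) = u ⬝ᵥ v := parseval Vᵀ hQQ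
  have qMS : ∀ x, x ⬝ᵥ M *ᵥ x = x ⬝ᵥ S *ᵥ x + ρ * ((δ ⬝ᵥ x) * (δ ⬝ᵥ x)) := by
    intro x
    have hvv : vecMulVec δ δ *ᵥ x = (δ ⬝ᵥ x) • δ := by
      ext i
      simp only [mulVec, dotProduct, vecMulVec_apply, Pi.smul_apply, smul_eq_mul]
      rw [Finset.sum_mul]
      exact Finset.sum_congr rfl fun j _ => by ring
    rw [hMdef, Matrix.add_mulVec, dotProduct_add, Matrix.smul_mulVec,
      dotProduct_smul, hvv, dotProduct_smul]
    simp only [smul_eq_mul]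
    rw [dotProduct_comm x δ]
  -- coefficient vanishing
  have eK : ∀ j : Fin p, j.1 < k → xi j ⬝ᵥ δ2 = 0 := by
    intro j hj
    refine span_dot_zero hδ2 ?_
    rintro y ⟨i, rfl⟩
    rw [horth, if_neg (Fin.ne_of_val_ne (by simp; omega))]
  have dK : ∀ j : Fin p, k ≤ j.1 → xi j ⬝ᵥ δ1 = 0 := by
    intro j hj
    refine span_dot_zero hδ1 ?_
    rintro y ⟨i, rfl⟩
    rw [horth, if_neg (Fin.ne_of_val_ne (by simp; omega))]
  have hd12 : δ1 ⬝ᵥ δ2 = 0 := by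
    rw [dotProduct_comm]
    refine span_dot_zero hδ1 ?_
    rintro y ⟨i, rfl⟩
    rw [dotProduct_comm]
    exact eK _ (by simp)
  have hBpos : 0 < δ2 ⬝ᵥ δ2 := dot_self_pos hδ2ne
  have hCnn : 0 ≤ δ1 ⬝ᵥ δ1 := by
    simp only [dotProduct]
    exact Finset.sum_nonneg fun i _ => mul_self_nonneg _
  have hδδ : δ ⬝ᵥ δ = δ1 ⬝ᵥ δ1 + δ2 ⬝ᵥ δ2 := by
    rw [hdec, dotProduct_add, add_dotProduct, add_dotProduct, hd12,
      dotProduct_comm δ2 δ1, hd12]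
    ring
  have hsumδ2 : ∑ i, δ2 i ^ 2 = δ2 ⬝ᵥ δ2 := by
    simp [dotProduct, sq]
  have hsumδ : ∑ i, δ i ^ 2 = δ1 ⬝ᵥ δ1 + δ2 ⬝ᵥ δ2 := by
    rw [← hδδ]; simp [dotProduct, sq]
  have hdt' : dt = d * ρ * (δ2 ⬝ᵥ δ2) / (d + ρ * ((δ1 ⬝ᵥ δ1) + (δ2 ⬝ᵥ δ2))) := by
    rw [hdt, hsumδ2, hsumδ]
  -- Part A : η_{k+1} ≤ lam_k
  have partA : η ⟨k + 1, by omega⟩ ≤ lam ⟨k, hkp⟩ :=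
    partA_aux hk hkp hk2p M S lam η xi V δ ρ hQQ horth hdesc hηdesc
      qM qS qMS parsξ parsV
  have partB : lam ⟨p - 1, by omega⟩ + dt ≤ η ⟨k, hkp⟩ :=
    partB_aux hk hkp hk2p M S lam η xi V δ δ1 δ2 ρ d dt hρ hd hQQ horth hdesc
      hηdesc qM qS qMS parsξ parsV hgap hdec eK dK hBpos hCnn hdt'
  have hq : lam ⟨k, hkp⟩ ≤ lam ⟨p - 1, by omega⟩ + ε := by linarith
  linarith
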